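/- For all α > 0 there exists a constant 0 < C_α < ∞ such that, for every discrete-time Markov transition kernel g with stationary distribution π and finite standardized mixing time t̄_m, and for all k ∈ ℕ with k ≥ 1, the maximum hitting time of the k-skeleton satisfies t_H^{(k)}(α) ≤ C_α ⌈ t̄_m / k ⌉. -/

import Mathlib

open MeasureTheory ENNReal

noncomputable section

namespace MixHit

variable {X : Type*} [MeasurableSpace X]

/-- Total variation distance between two Borel measures. -/
def tv (μ ν : Measure X) : ℝ≥0∞ :=
  ⨆ (A : Set X) (_ : MeasurableSet A), (μ A - ν A) ⊔ (ν A - μ A)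

/-- `g` is a Markov transition kernel: each `g x` is a (Borel) probability measure,
measurably in `x`. -/
def IsMarkov (g : X → Measure X) : Prop :=
  (∀ x, IsProbabilityMeasure (g x)) ∧
    ∀ A : Set X, MeasurableSet A → Measurable fun x => g x A

/-- `t`-step transition probabilities (`iterK g 0 x = δ_x`). -/
def iterK (g : X → Measure X) : ℕ → X → Measure X
  | 0 => fun x => Measure.dirac x
  | n + 1 => fun x => (g x).bind (iterK g n)

/-- `π` is a stationary distribution for `g`. -/
def Stationary (g : X → Measure X) (π : Measure X) : Prop :=
  ∀ A : Set X, MeasurableSet A → ∫⁻ x, g x A ∂π = π A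

/-- `g` is reversible with respect to `π`. -/
def Reversible (g : X → Measure X) (π : Measure X) : Prop :=
  ∀ A B : Set X, MeasurableSet A → MeasurableSet B →
    ∫⁻ x in A, g x B ∂π = ∫⁻ x in B, g x A ∂π

/-- The lazy kernel `g_L(x,·) = (1/2) g(x,·) + (1/2) δ_x`. -/
def lazy (g : X → Measure X) : X → Measure X := fun x =>
  (2 : ℝ≥0∞)⁻¹ • g x + (2 : ℝ≥0∞)⁻¹ • Measure.dirac x

/-- Mixing time `min {t : sup_x ‖g^t(x,·) − π‖ ≤ ε}`, as an element of `ℝ≥0∞`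
(`⊤` if there is no such `t`). -/
def mixTime (g : X → Measure X) (π : Measure X) (ε : ℝ≥0∞) : ℝ≥0∞ :=
  ⨅ (t : ℕ) (_ : ∀ x, tv (iterK g t x) π ≤ ε), (t : ℝ≥0∞)

/-- `d̄(t) = sup_{x,y} ‖g^t(x,·) − g^t(y,·)‖`. -/
def dbar (g : X → Measure X) (t : ℕ) : ℝ≥0∞ :=
  ⨆ (x : X) (y : X), tv (iterK g t x) (iterK g t y)

/-- Standardized mixing time `min {t : d̄(t) ≤ ε}` (`⊤` if there is no such `t`). -/
def stdMix (g : X → Measure X) (ε : ℝ≥0∞) : ℝ≥0∞ :=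
  ⨅ (t : ℕ) (_ : dbar g t ≤ ε), (t : ℝ≥0∞)

/-- `P_x(τ_A = t)` for the chain with kernel `g` started at `x`, where
`τ_A = min {t : X_t ∈ A}` (first-step recursion). -/
def hitEq (g : X → Measure X) (A : Set X) : ℕ → X → ℝ≥0∞
  | 0 => fun x => A.indicator (fun _ => 1) x
  | n + 1 => fun x => Aᶜ.indicator (fun x' => ∫⁻ y, hitEq g A n y ∂(g x')) x

/-- `P_x(τ_A ≤ t)`. -/
def hitLE (g : X → Measure X) (A : Set X) (t : ℕ) (x : X) : ℝ≥0∞ :=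
  ∑ s ∈ Finset.range (t + 1), hitEq g A s x

/-- `E_x[τ_A] = ∑_{t ≥ 0} P_x(τ_A > t)`. -/
def expHit (g : X → Measure X) (A : Set X) (x : X) : ℝ≥0∞ :=
  ∑' t : ℕ, (1 - hitLE g A t x)

/-- Maximum hitting time `t_H(α) = sup {E_x[τ_A] : x ∈ X, A Borel, π(A) ≥ α}`. -/
def maxHit (g : X → Measure X) (π : Measure X) (α : ℝ) : ℝ≥0∞ :=
  ⨆ (x : X) (A : Set X) (_ : MeasurableSet A) (_ : ENNReal.ofReal α ≤ π A),
    expHit g A x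

/-- Large hitting time
`τ_g(α) = min {t : inf {P_x(τ_A ≤ t) : x ∈ X, A Borel, π(A) ≥ α} > 0.9}`. -/
def largeHit (g : X → Measure X) (π : Measure X) (α : ℝ) : ℝ≥0∞ :=
  ⨅ (t : ℕ) (_ : (9 / 10 : ℝ≥0∞) <
      ⨅ (x : X) (A : Set X) (_ : MeasurableSet A) (_ : ENNReal.ofReal α ≤ π A),
        hitLE g A t x),
    (t : ℝ≥0∞)

/-- The strong Feller property: continuity of `x ↦ g(x,·)` in total variation. -/
def StrongFeller [PseudoMetricSpace X] (g : X → Measure X) : Prop :=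
  ∀ x : X, ∀ ε : ℝ, 0 < ε → ∃ δ : ℝ, 0 < δ ∧
    ∀ y : X, dist y x < δ → tv (g x) (g y) < ENNReal.ofReal ε

/-- Law of `X_t` on the event that `t` is the first time the chain lies in `S`. -/
def enterDist (g : X → Measure X) (S : Set X) : ℕ → X → Measure X
  | 0 => fun x => (Measure.dirac x).restrict S
  | n + 1 => fun x => Sᶜ.indicator (fun x' => (g x').bind (enterDist g S n)) x

/-- Law of the chain's position at its first entrance (at a time `≥ 0`) into `S`. -/
def hitMeasure (g : X → Measure X) (S : Set X) (x : X) : Measure X :=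
  Measure.sum fun t => enterDist g S t x

/-- One step of the trace of `g` on `S`: take one `g`-step, then run until the
first entrance into `S`. -/
def traceK (g : X → Measure X) (S : Set X) : X → Measure X :=
  fun x => (g x).bind (hitMeasure g S)

/-- The trace of `g` on `S`, viewed as a kernel on the subtype `S`. -/
def traceSub (g : X → Measure X) (S : Set X) : S → Measure S :=
  fun x => (traceK g S (x : X)).comap (Subtype.val)

/-- Normalization of `π` to `S`, as a measure on the subtype `S`. -/
def normSub (π : Measure X) (S : Set X) : Measure S :=
  (π S)⁻¹ • π.comap (Subtype.val : S → X)

/-- Ergodicity: from every starting point, the chain converges to `π`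
in total variation. -/
def ErgodicK (g : X → Measure X) (π : Measure X) : Prop :=
  Stationary g π ∧
    ∀ x : X, Filter.Tendsto (fun t => tv (iterK g t x) π) Filter.atTop (nhds 0)

/-!
`d̄` is submultiplicative, so `d̄(ℓ t̄_m) ≤ 4^{-ℓ} ≤ α/2` for some `ℓ` depending only on `α`, and
stationarity gives `P^t(y, A) ≥ π(A) - d̄(t)`. Hence after `m = ℓ ⌈t̄_m / k⌉` steps the `k`-skeleton
has reached any `A` with `π(A) ≥ α` with probability at least `α/2`, from every starting point.
By the Markov property the chain then avoids `A` for `j m` steps with probability at most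
`(1 - α/2)^j`, and summing this geometric tail gives `E_x[τ_A] ≤ 2m/α`.
-/

section Kernel

variable {g : X → Measure X}

lemma IsMarkov.measurable (hg : IsMarkov g) : Measurable g :=
  Measure.measurable_of_measurable_coe _ fun _ hs => hg.2 _ hs

lemma measurable_iterK (hg : IsMarkov g) : ∀ n, Measurable (iterK g n)
  | 0 => Measure.measurable_dirac
  | n + 1 => (Measure.measurable_bind' (measurable_iterK hg n)).comp hg.measurable

lemma iterK_succ_apply (hg : IsMarkov g) {A : Set X} (hA : MeasurableSet A) (n : ℕ) (x : X) :
    iterK g (n + 1) x A = ∫⁻ y, iterK g n y A ∂(g x) :=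
  Measure.bind_apply hA (measurable_iterK hg n).aemeasurable

lemma isProbabilityMeasure_iterK (hg : IsMarkov g) :
    ∀ (n : ℕ) (x : X), IsProbabilityMeasure (iterK g n x)
  | 0, _ => Measure.dirac.isProbabilityMeasure
  | n + 1, x => by
    have := hg.1 x
    constructor
    rw [iterK_succ_apply hg MeasurableSet.univ]
    simp [fun y => (isProbabilityMeasure_iterK hg n y).measure_univ]

lemma isMarkov_iterK (hg : IsMarkov g) (n : ℕ) : IsMarkov (iterK g n) :=
  ⟨isProbabilityMeasure_iterK hg n,
    fun _ hA => (Measure.measurable_coe hA).comp (measurable_iterK hg n)⟩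

lemma iterK_add (hg : IsMarkov g) (s t : ℕ) (x : X) :
    iterK g (s + t) x = (iterK g s x).bind (iterK g t) := by
  induction s generalizing x with
  | zero => simp [iterK, Measure.dirac_bind (measurable_iterK hg t)]
  | succ s ih =>
    rw [Nat.add_right_comm]
    show (g x).bind (iterK g (s + t)) = ((g x).bind (iterK g s)).bind (iterK g t)
    rw [funext ih, ← Measure.bind_bind (measurable_iterK hg s).aemeasurable
      (measurable_iterK hg t).aemeasurable]

lemma iterK_iterK (hg : IsMarkov g) (k m : ℕ) : iterK (iterK g k) m = iterK g (m * k) := by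
  induction m with
  | zero => funext x; simp [iterK]
  | succ m ih =>
    funext x
    rw [show (m + 1) * k = k + m * k by ring, iterK_add hg, ← ih]
    rfl

lemma Stationary.bind_eq (hg : IsMarkov g) {π : Measure X} (hs : Stationary g π) :
    π.bind g = π :=
  Measure.ext fun A hA => (Measure.bind_apply hA hg.measurable.aemeasurable).trans (hs A hA)

lemma Stationary.lintegral_iterK_apply (hg : IsMarkov g) {π : Measure X} (hs : Stationary g π)
    (t : ℕ) {A : Set X} (hA : MeasurableSet A) : ∫⁻ y, iterK g t y A ∂π = π A := by
  induction t with
  | zero => simp [iterK, hA]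
  | succ t ih =>
    have hm : Measurable fun z => iterK g t z A :=
      (Measure.measurable_coe hA).comp (measurable_iterK hg t)
    simp_rw [iterK_succ_apply hg hA]
    rw [← Measure.lintegral_bind hg.measurable.aemeasurable hm.aemeasurable, hs.bind_eq hg, ih]

end Kernel

section TotalVariation

variable {μ ν : Measure X}

lemma apply_sub_apply_le_tv (μ ν : Measure X) {A : Set X} (hA : MeasurableSet A) :
    μ A - ν A ≤ tv μ ν :=
  le_sup_left.trans
    (le_iSup₂ (f := fun A (_ : MeasurableSet A) => (μ A - ν A) ⊔ (ν A - μ A)) A hA)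

lemma tv_le_one (μ ν : Measure X) [IsProbabilityMeasure μ] [IsProbabilityMeasure ν] :
    tv μ ν ≤ 1 :=
  iSup₂_le fun _ _ => sup_le (tsub_le_self.trans prob_le_one) (tsub_le_self.trans prob_le_one)

lemma lintegral_le_lintegral_add_tv {f : X → ℝ≥0∞} (hf : Measurable f) (hf1 : ∀ x, f x ≤ 1) :
    ∫⁻ x, f x ∂μ ≤ ∫⁻ x, f x ∂ν + tv μ ν := by
  have hfr : Measurable fun x => (f x).toReal := hf.ennreal_toReal
  have layer_cake : ∀ ρ : Measure X,
      ∫⁻ x, f x ∂ρ = ∫⁻ s in Set.Ioi (0 : ℝ), ρ {x | s ≤ (f x).toReal} := fun ρ => by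
    rw [← lintegral_eq_lintegral_meas_le ρ (.of_forall fun _ => ENNReal.toReal_nonneg)
      hfr.aemeasurable]
    exact lintegral_congr fun x =>
      (ENNReal.ofReal_toReal (ne_top_of_le_ne_top one_ne_top (hf1 x))).symm
  have level : ∀ s ∈ Set.Ioi (0 : ℝ), μ {x | s ≤ (f x).toReal} ≤
      ν {x | s ≤ (f x).toReal} + (Set.Ioc (0 : ℝ) 1).indicator (fun _ => tv μ ν) s := by
    intro s hs
    rcases le_or_gt s 1 with hs1 | hs1
    · rw [Set.indicator_of_mem (Set.mem_Ioc.mpr ⟨hs, hs1⟩)]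
      exact tsub_le_iff_left.mp (apply_sub_apply_le_tv μ ν (measurableSet_le measurable_const hfr))
    · have hempty : {x | s ≤ (f x).toReal} = ∅ := Set.eq_empty_of_forall_notMem fun x hx =>
        ((ENNReal.toReal_le_of_le_ofReal zero_le_one (by simpa using hf1 x)).trans_lt hs1).not_ge hx
      simp [hempty]
  calc ∫⁻ x, f x ∂μ ≤ ∫⁻ s in Set.Ioi (0 : ℝ),
        (ν {x | s ≤ (f x).toReal} + (Set.Ioc (0 : ℝ) 1).indicator (fun _ => tv μ ν) s) := by
        rw [layer_cake]
        exact setLIntegral_mono' measurableSet_Ioi level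
    _ = ∫⁻ x, f x ∂ν + tv μ ν := by
        rw [lintegral_add_right _ (measurable_const.indicator measurableSet_Ioc), ← layer_cake,
          lintegral_indicator measurableSet_Ioc, Measure.restrict_restrict measurableSet_Ioc,
          setLIntegral_const, Set.inter_eq_self_of_subset_left Set.Ioc_subset_Ioi_self,
          Real.volume_Ioc]
        simp

lemma lintegral_le_lintegral_add_mul_tv {f : X → ℝ≥0∞} (hf : Measurable f) {c : ℝ≥0∞}
    (hc : c ≠ ∞) (hfc : ∀ x, f x ≤ c) :
    ∫⁻ x, f x ∂μ ≤ ∫⁻ x, f x ∂ν + c * tv μ ν := by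
  rcases eq_or_ne c 0 with rfl | hc0
  · simp [show f = 0 from funext fun x => le_zero_iff.mp (hfc x)]
  have hscale : ∀ ρ : Measure X, ∫⁻ x, f x ∂ρ = c * ∫⁻ x, c⁻¹ * f x ∂ρ := fun ρ => by
    rw [lintegral_const_mul _ hf, ← mul_assoc, ENNReal.mul_inv_cancel hc0 hc, one_mul]
  rw [hscale μ, hscale ν, ← mul_add]
  gcongr
  refine lintegral_le_lintegral_add_tv (measurable_const.mul hf) fun x => ?_
  calc c⁻¹ * f x ≤ c⁻¹ * c := by gcongr; exact hfc x
    _ = 1 := ENNReal.inv_mul_cancel hc0 hc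

end TotalVariation

section Dbar

variable {g : X → Measure X}

lemma tv_le_dbar (t : ℕ) (x y : X) : tv (iterK g t x) (iterK g t y) ≤ dbar g t :=
  le_iSup₂ (f := fun x y => tv (iterK g t x) (iterK g t y)) x y

lemma dbar_le_one (hg : IsMarkov g) (t : ℕ) : dbar g t ≤ 1 := by
  refine iSup₂_le fun x y => ?_
  have := isProbabilityMeasure_iterK hg t x
  have := isProbabilityMeasure_iterK hg t y
  exact tv_le_one _ _

lemma iterK_add_apply_sub_le (hg : IsMarkov g) (s t : ℕ) (x y : X) {A : Set X}
    (hA : MeasurableSet A) :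
    iterK g (s + t) x A - iterK g (s + t) y A ≤ dbar g s * dbar g t := by
  set h : X → ℝ≥0∞ := fun z => iterK g t z A
  have hh : Measurable h := (Measure.measurable_coe hA).comp (measurable_iterK hg t)
  set m := ⨅ z, h z
  -- Centring `h` at its infimum is what makes the factor `d̄(t)` instead of `1` appear below.
  have hosc : ∀ z, h z - m ≤ dbar g t := fun z => by
    rw [ENNReal.sub_iInf]
    exact iSup_le fun w => (apply_sub_apply_le_tv _ _ hA).trans (tv_le_dbar t z w)
  have hsplit : ∀ u, iterK g (s + t) u A = ∫⁻ z, (h z - m) ∂(iterK g s u) + m := fun u => by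
    have := isProbabilityMeasure_iterK hg s u
    calc iterK g (s + t) u A = ∫⁻ z, h z ∂(iterK g s u) := by
          rw [iterK_add hg, Measure.bind_apply hA (measurable_iterK hg t).aemeasurable]
      _ = ∫⁻ z, (h z - m + m) ∂(iterK g s u) :=
          lintegral_congr fun z => (tsub_add_cancel_of_le (iInf_le h z)).symm
      _ = ∫⁻ z, (h z - m) ∂(iterK g s u) + m := by
          rw [lintegral_add_right _ measurable_const, lintegral_const, measure_univ, mul_one]
  rw [hsplit x, hsplit y, tsub_le_iff_left]
  calc ∫⁻ z, (h z - m) ∂(iterK g s x) + m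
      ≤ ∫⁻ z, (h z - m) ∂(iterK g s y) + dbar g t * tv (iterK g s x) (iterK g s y) + m := by
        gcongr
        exact lintegral_le_lintegral_add_mul_tv (hh.sub measurable_const)
          (ne_top_of_le_ne_top one_ne_top (dbar_le_one hg t)) hosc
    _ = ∫⁻ z, (h z - m) ∂(iterK g s y) + m + dbar g t * tv (iterK g s x) (iterK g s y) :=
        add_right_comm _ _ _
    _ ≤ ∫⁻ z, (h z - m) ∂(iterK g s y) + m + dbar g s * dbar g t := by
        rw [mul_comm (dbar g s)]
        gcongr
        exact tv_le_dbar s x y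

lemma dbar_add_le (hg : IsMarkov g) (s t : ℕ) : dbar g (s + t) ≤ dbar g s * dbar g t :=
  iSup₂_le fun x y => iSup₂_le fun _ hA =>
    sup_le (iterK_add_apply_sub_le hg s t x y hA) (iterK_add_apply_sub_le hg s t y x hA)

lemma dbar_antitone (hg : IsMarkov g) : Antitone (dbar g) := by
  intro a n h
  obtain ⟨b, rfl⟩ := Nat.exists_eq_add_of_le h
  calc dbar g (a + b) ≤ dbar g a * dbar g b := dbar_add_le hg a b
    _ ≤ dbar g a := mul_le_of_le_one_right' (dbar_le_one hg b)

lemma dbar_mul_le_pow (hg : IsMarkov g) (t ℓ : ℕ) : dbar g (ℓ * t) ≤ dbar g t ^ ℓ := by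
  induction ℓ with
  | zero => simpa using dbar_le_one hg 0
  | succ ℓ ih =>
    rw [Nat.succ_mul, pow_succ]
    exact (dbar_add_le hg _ _).trans (by gcongr)

lemma dbar_mul_ceil_div_mul_le (hg : IsMarkov g) {t : ℕ} (ℓ : ℕ) {k : ℕ} (hk : 1 ≤ k) :
    dbar g (ℓ * ⌈(t : ℝ) / k⌉₊ * k) ≤ dbar g t ^ ℓ := by
  have hceil := Nat.le_ceil ((t : ℝ) / k)
  rw [div_le_iff₀ (by exact_mod_cast hk)] at hceil
  have ht : t ≤ ⌈(t : ℝ) / k⌉₊ * k := by exact_mod_cast hceil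
  calc dbar g (ℓ * ⌈(t : ℝ) / k⌉₊ * k) ≤ dbar g (ℓ * t) :=
        dbar_antitone hg (by rw [mul_assoc]; exact Nat.mul_le_mul_left ℓ ht)
    _ ≤ dbar g t ^ ℓ := dbar_mul_le_pow hg t ℓ

lemma exists_stdMix_eq {ε : ℝ≥0∞} (h : stdMix g ε ≠ ⊤) :
    ∃ t : ℕ, stdMix g ε = t ∧ dbar g t ≤ ε := by
  classical
  have hex : ∃ t, dbar g t ≤ ε := by
    by_contra! hc
    exact h (iInf₂_eq_top.mpr fun t ht => absurd ht (hc t).not_ge)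
  refine ⟨Nat.find hex, le_antisymm ?_ ?_, Nat.find_spec hex⟩
  · exact iInf₂_le (f := fun t (_ : dbar g t ≤ ε) => (t : ℝ≥0∞)) _ (Nat.find_spec hex)
  · exact le_iInf₂ fun t ht => by exact_mod_cast Nat.find_min' hex ht

lemma half_le_iterK_apply (hg : IsMarkov g) {π : Measure X} [IsProbabilityMeasure π]
    (hs : Stationary g π) {t : ℕ} {a : ℝ≥0∞} (hd : dbar g t ≤ a / 2) {A : Set X}
    (hA : MeasurableSet A) (haA : a ≤ π A) (y : X) : a / 2 ≤ iterK g t y A := by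
  have hmeas : Measurable fun z => iterK g t z A :=
    (Measure.measurable_coe hA).comp (measurable_iterK hg t)
  have hgap : π A - iterK g t y A ≤ dbar g t :=
    calc π A - iterK g t y A = ∫⁻ z, iterK g t z A ∂π - ∫⁻ _, iterK g t y A ∂π := by
          rw [hs.lintegral_iterK_apply hg t hA, lintegral_const, measure_univ, mul_one]
      _ ≤ ∫⁻ z, (iterK g t z A - iterK g t y A) ∂π :=
          lintegral_sub_le' _ _ measurable_const.aemeasurable
      _ ≤ ∫⁻ _, dbar g t ∂π :=
          lintegral_mono fun z => (apply_sub_apply_le_tv _ _ hA).trans (tv_le_dbar t z y)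
      _ = dbar g t := by rw [lintegral_const, measure_univ, mul_one]
  have hfin : a / 2 ≠ ∞ := ne_top_of_le_ne_top (measure_ne_top π A) (ENNReal.half_le_self.trans haA)
  refine (ENNReal.add_le_add_iff_right hfin).mp ?_
  calc a / 2 + a / 2 = a := ENNReal.add_halves a
    _ ≤ π A := haA
    _ ≤ iterK g t y A + a / 2 := tsub_le_iff_left.mp (hgap.trans hd)

end Dbar

section Hitting

variable {h : X → Measure X} {A : Set X}

lemma measurable_hitEq (hh : IsMarkov h) (hA : MeasurableSet A) :
    ∀ n, Measurable (hitEq h A n)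
  | 0 => measurable_one.indicator hA
  | n + 1 => ((Measure.measurable_lintegral (measurable_hitEq hh hA n)).comp
      hh.measurable).indicator hA.compl

lemma measurable_hitLE (hh : IsMarkov h) (hA : MeasurableSet A) (t : ℕ) :
    Measurable (hitLE h A t) :=
  Finset.measurable_sum _ fun s _ => measurable_hitEq hh hA s

lemma hitLE_zero_of_notMem {x : X} (hx : x ∉ A) : hitLE h A 0 x = 0 := by
  simp [hitLE, hitEq, hx]

lemma hitLE_of_mem {x : X} (hx : x ∈ A) (t : ℕ) : hitLE h A t x = 1 := by
  have hx' : x ∉ Aᶜ := fun h => h hx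
  simp [hitLE, Finset.sum_range_succ', hitEq, hx, hx']

lemma hitLE_succ_of_notMem (hh : IsMarkov h) (hA : MeasurableSet A) (t : ℕ) {x : X}
    (hx : x ∉ A) : hitLE h A (t + 1) x = ∫⁻ y, hitLE h A t y ∂(h x) := by
  have hx' : x ∈ Aᶜ := hx
  simp only [hitLE]
  rw [Finset.sum_range_succ', lintegral_finsetSum _ fun s _ => measurable_hitEq hh hA s]
  simp [hitEq, hx, hx']

lemma hitLE_mono (x : X) : Monotone fun t => hitLE h A t x := fun _ _ htt =>
  Finset.sum_le_sum_of_subset (Finset.range_subset_range.mpr (Nat.succ_le_succ htt))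

lemma hitLE_le_one (hh : IsMarkov h) (hA : MeasurableSet A) (t : ℕ) (x : X) :
    hitLE h A t x ≤ 1 := by
  induction t generalizing x with
  | zero => by_cases hx : x ∈ A <;> simp [hitLE_of_mem, hitLE_zero_of_notMem, hx]
  | succ t ih =>
    by_cases hx : x ∈ A
    · exact (hitLE_of_mem hx _).le
    have := hh.1 x
    rw [hitLE_succ_of_notMem hh hA t hx]
    exact (lintegral_mono ih).trans_eq (by simp)

lemma iterK_apply_le_hitLE (hh : IsMarkov h) (hA : MeasurableSet A) (m : ℕ) (x : X) :
    iterK h m x A ≤ hitLE h A m x := by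
  induction m generalizing x with
  | zero => by_cases hx : x ∈ A <;> simp [iterK, hA, hitLE_of_mem, hitLE_zero_of_notMem, hx]
  | succ m ih =>
    by_cases hx : x ∈ A
    · have := isProbabilityMeasure_iterK hh (m + 1) x
      exact prob_le_one.trans_eq (hitLE_of_mem hx _).symm
    rw [iterK_succ_apply hh hA, hitLE_succ_of_notMem hh hA m hx]
    exact lintegral_mono ih

lemma one_sub_hitLE_succ (hh : IsMarkov h) (hA : MeasurableSet A) (t : ℕ) {x : X}
    (hx : x ∉ A) : 1 - hitLE h A (t + 1) x = ∫⁻ y, (1 - hitLE h A t y) ∂(h x) := by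
  have := hh.1 x
  have hfin : ∫⁻ y, hitLE h A t y ∂(h x) ≠ ∞ :=
    ne_top_of_le_ne_top one_ne_top
      ((lintegral_mono (hitLE_le_one hh hA t)).trans_eq (by simp))
  rw [hitLE_succ_of_notMem hh hA t hx, lintegral_sub (measurable_hitLE hh hA t) hfin
    (.of_forall (hitLE_le_one hh hA t)), lintegral_const, measure_univ, mul_one]

lemma one_sub_hitLE_add_le (hh : IsMarkov h) (hA : MeasurableSet A) (s t : ℕ) (x : X) :
    1 - hitLE h A (s + t) x ≤ (⨆ y, (1 - hitLE h A t y)) * (1 - hitLE h A s x) := by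
  induction s generalizing x with
  | zero =>
    by_cases hx : x ∈ A
    · simp [hitLE_of_mem hx]
    rw [zero_add, hitLE_zero_of_notMem hx, tsub_zero, mul_one]
    exact le_iSup (fun y => 1 - hitLE h A t y) x
  | succ s ih =>
    by_cases hx : x ∈ A
    · simp [hitLE_of_mem hx]
    rw [Nat.add_right_comm, one_sub_hitLE_succ hh hA _ hx, one_sub_hitLE_succ hh hA _ hx]
    exact (lintegral_mono ih).trans_eq
      (lintegral_const_mul _ ((measurable_hitLE hh hA s).const_sub 1))

lemma one_sub_hitLE_mul_le (hh : IsMarkov h) (hA : MeasurableSet A) (t j : ℕ) (x : X) :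
    1 - hitLE h A (j * t) x ≤ (⨆ y, (1 - hitLE h A t y)) ^ j := by
  induction j generalizing x with
  | zero => simp
  | succ j ih =>
    rw [Nat.succ_mul, pow_succ']
    exact (one_sub_hitLE_add_le hh hA _ t x).trans (by gcongr; exact ih x)

lemma tsum_pow_div_eq (c : ℝ≥0∞) {t : ℕ} (ht : t ≠ 0) :
    ∑' n : ℕ, c ^ (n / t) = t * (1 - c)⁻¹ := by
  have : NeZero t := ⟨ht⟩
  calc ∑' n : ℕ, c ^ (n / t) = ∑' q : ℕ × Fin t, c ^ q.1 := by
        rw [← (Nat.divModEquiv t).symm.tsum_eq]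
        congr 1
        funext ⟨j, r⟩
        simp only [Nat.divModEquiv, Equiv.coe_fn_symm_mk]
        rw [add_comm, Nat.add_mul_div_right _ _ (Nat.pos_of_ne_zero ht), Nat.div_eq_of_lt r.2,
          zero_add]
    _ = ∑' j : ℕ, ∑' _ : Fin t, c ^ j := ENNReal.tsum_prod (f := fun j (_ : Fin t) => c ^ j)
    _ = t * (1 - c)⁻¹ := by
        simp [ENNReal.tsum_mul_left, ENNReal.tsum_geometric]

lemma expHit_le (hh : IsMarkov h) (hA : MeasurableSet A) {t : ℕ} {p : ℝ≥0∞} (hp : p ≠ 0)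
    (hhit : ∀ y, p ≤ hitLE h A t y) (x : X) : expHit h A x ≤ t * p⁻¹ := by
  rcases eq_or_ne t 0 with rfl | ht
  · have hxA : x ∈ A := by
      by_contra hx
      exact hp (le_zero_iff.mp ((hhit x).trans_eq (hitLE_zero_of_notMem hx)))
    simp [expHit, hitLE_of_mem hxA]
  have : Nonempty X := ⟨x⟩
  set c := ⨆ y, (1 - hitLE h A t y)
  have hpc : p ≤ 1 - c := by
    rw [ENNReal.sub_iSup one_ne_top]
    exact le_iInf fun y => by
      rw [ENNReal.sub_sub_cancel one_ne_top (hitLE_le_one hh hA t y)]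
      exact hhit y
  calc expHit h A x ≤ ∑' n : ℕ, c ^ (n / t) := ENNReal.tsum_le_tsum fun n =>
        (tsub_le_tsub_left (hitLE_mono x (Nat.div_mul_le_self n t)) 1).trans
          (one_sub_hitLE_mul_le hh hA t (n / t) x)
    _ = t * (1 - c)⁻¹ := tsum_pow_div_eq c ht
    _ ≤ t * p⁻¹ := by gcongr

end Hitting

lemma exists_pos_pow_le {p : ℝ≥0∞} (hp : p ≠ 0) : ∃ ℓ : ℕ, 0 < ℓ ∧ (1 / 4 : ℝ≥0∞) ^ ℓ ≤ p := by
  obtain ⟨n, hn⟩ := ENNReal.exists_inv_two_pow_lt hp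
  refine ⟨n + 1, n.succ_pos, le_trans ?_ hn.le⟩
  calc (1 / 4 : ℝ≥0∞) ^ (n + 1) ≤ 2⁻¹ ^ (n + 1) := by gcongr; norm_num
    _ ≤ 2⁻¹ ^ n := pow_le_pow_right_of_le_one' (by norm_num) n.le_succ

/-- the maximum hitting time of the `k`-skeleton is bounded by a
constant multiple of `⌈t̄_m / k⌉`. -/
theorem stmt10 (α : ℝ) (hα : 0 < α) :
    ∃ C : ℝ, 0 < C ∧
      ∀ (X : Type) [MetricSpace X] [MeasurableSpace X] [BorelSpace X]
        (g : X → Measure X) (π : Measure X),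
        IsMarkov g → IsProbabilityMeasure π → Stationary g π →
        stdMix g (1 / 4) ≠ ⊤ →
        ∀ k : ℕ, 1 ≤ k →
          maxHit (iterK g k) π α ≤
            ENNReal.ofReal C * (⌈(stdMix g (1 / 4)).toReal / (k : ℝ)⌉₊ : ℝ≥0∞) := by
  have hα2 : ENNReal.ofReal α / 2 ≠ 0 := (ENNReal.half_pos (ENNReal.ofReal_pos.mpr hα).ne').ne'
  obtain ⟨ℓ, hℓ, hℓα⟩ := exists_pos_pow_le hα2
  refine ⟨ℓ * (2 / α), by positivity, fun X _ _ _ g π hg hπ hs hfin k hk => ?_⟩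
  obtain ⟨t₀, hstd, ht₀⟩ := exists_stdMix_eq hfin
  rw [hstd, ENNReal.toReal_natCast]
  set N := ⌈(t₀ : ℝ) / k⌉₊
  have hmix : dbar g (ℓ * N * k) ≤ ENNReal.ofReal α / 2 :=
    (dbar_mul_ceil_div_mul_le hg ℓ hk).trans ((pow_le_pow_left₀ zero_le ht₀ ℓ).trans hℓα)
  refine iSup_le fun x => iSup_le fun A => iSup_le fun hA => iSup_le fun hαA => ?_
  have hhit : ∀ y, ENNReal.ofReal α / 2 ≤ hitLE (iterK g k) A (ℓ * N) y := fun y =>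
    calc ENNReal.ofReal α / 2 ≤ iterK g (ℓ * N * k) y A := half_le_iterK_apply hg hs hmix hA hαA y
      _ = iterK (iterK g k) (ℓ * N) y A := by rw [iterK_iterK hg]
      _ ≤ hitLE (iterK g k) A (ℓ * N) y := iterK_apply_le_hitLE (isMarkov_iterK hg k) hA _ y
  calc expHit (iterK g k) A x ≤ (ℓ * N : ℕ) * (ENNReal.ofReal α / 2)⁻¹ :=
        expHit_le (isMarkov_iterK hg k) hA hα2 hhit x
    _ = ENNReal.ofReal (ℓ * (2 / α)) * N := by
        rw [ENNReal.ofReal_mul (by positivity), ENNReal.ofReal_natCast,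
          ENNReal.ofReal_div_of_pos hα, ENNReal.inv_div (by simp) (by simp), ENNReal.ofReal_ofNat]
        push_cast
        ring

end MixHit
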